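/- arXiv:2401.15911 — 4 statements merged into one kernel-verified Lean document; each statement's English description precedes it below -/
import Mathlib

section
/- Consider random variables U, E1, E2, E2' on a finite probability space where E2' has the same distribution as E2, (E1, E2, E2') are each independent of U, and additionally E2' is independent of (E1, U) and E2 is independent of (E1, U). Define X = f1(E1, u) and Y = f2(X, E2, u) and Y'(x) = f2(x, E2', u) for measurable functions f1, f2. Then for any u and x with P(X=x, U=u) > 0 and any y: P(Y'(x)=y | X=x, U=u) = P(Y=y | X=x, U=u). (Distribution-consistency rule in DiscoSCM.) -/
open scoped Classical
noncomputable section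

variable {Ω : Type*} [Fintype Ω]

/-- Probability of an event under a weight function `p`. -/
def Pr (p : Ω → ℝ) (A : Set Ω) : ℝ := ∑ ω, if ω ∈ A then p ω else 0

/-- Conditional probability `P(A | B)`. -/
def cPr (p : Ω → ℝ) (A B : Set Ω) : ℝ := Pr p (A ∩ B) / Pr p B

/-- Expectation. -/
def Ex (p : Ω → ℝ) (Y : Ω → ℝ) : ℝ := ∑ ω, p ω * Y ω

/-- Conditional expectation given an event. -/
def cEx (p : Ω → ℝ) (Y : Ω → ℝ) (A : Set Ω) : ℝ :=
  (∑ ω, if ω ∈ A then p ω * Y ω else 0) / Pr p A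

/-- `p` is a probability mass function on `Ω`. -/
def IsProb (p : Ω → ℝ) : Prop := (∀ ω, 0 ≤ p ω) ∧ ∑ ω, p ω = 1

lemma Pr_fiber {ι : Type*} (p : Ω → ℝ) (g : Ω → ι) (φ : ι → Prop) (B : Set Ω) :
    Pr p ({ω | φ (g ω)} ∩ B) =
    ∑ e ∈ Finset.univ.image g, if φ e then Pr p ({ω | g ω = e} ∩ B) else 0 := by
  have hterm : ∀ e : ι, (if φ e then Pr p ({ω | g ω = e} ∩ B) else 0)
      = ∑ ω, if φ e ∧ g ω = e ∧ ω ∈ B then p ω else 0 := by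
    intro e
    by_cases h : φ e
    · simp only [h, if_true, true_and, Pr]
      apply Finset.sum_congr rfl
      intro ω _
      simp [Set.mem_inter_iff, Set.mem_setOf_eq]
    · simp [h]
  simp only [hterm]
  rw [Finset.sum_comm]
  unfold Pr
  apply Finset.sum_congr rfl
  intro ω _
  rw [Finset.sum_eq_single (g ω)]
  · by_cases h : φ (g ω) ∧ ω ∈ B
    · simp [Set.mem_inter_iff, Set.mem_setOf_eq, h.1, h.2]
    · rw [if_neg, if_neg]
      · simpa [Set.mem_inter_iff, Set.mem_setOf_eq] using h
      · simpa using h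
  · intro e _ hne
    rw [if_neg]
    rintro ⟨-, rfl, -⟩
    exact hne rfl
  · intro habs
    exact absurd (Finset.mem_image_of_mem g (Finset.mem_univ ω)) habs

lemma Pr_empty_fiber {ι : Type*} (p : Ω → ℝ) (g : Ω → ι) {e : ι}
    (he : e ∉ Finset.univ.image g) : Pr p {ω | g ω = e} = 0 := by
  unfold Pr
  apply Finset.sum_eq_zero
  intro ω _
  rw [if_neg]
  intro h
  exact he (Finset.mem_image.mpr ⟨ω, Finset.mem_univ ω, h⟩)

/-- Distribution-consistency rule in DiscoSCM. -/
theorem stmt1 {ιU ι1 ι2 ιX ιY : Type*} (p : Ω → ℝ) (hp : IsProb p)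
    (U : Ω → ιU) (E1 : Ω → ι1) (E2 E2' : Ω → ι2)
    (f1 : ι1 → ιU → ιX) (f2 : ιX → ι2 → ιU → ιY)
    (X : Ω → ιX) (Y : Ω → ιY)
    (hXdef : ∀ ω, X ω = f1 (E1 ω) (U ω))
    (hYdef : ∀ ω, Y ω = f2 (X ω) (E2 ω) (U ω))
    (hiddist : ∀ e : ι2, Pr p {ω | E2' ω = e} = Pr p {ω | E2 ω = e})
    (hindep2' : ∀ (e : ι2) (e1 : ι1) (u : ιU),
      Pr p ({ω | E2' ω = e} ∩ ({ω | E1 ω = e1} ∩ {ω | U ω = u})) =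
      Pr p {ω | E2' ω = e} * Pr p ({ω | E1 ω = e1} ∩ {ω | U ω = u}))
    (hindep2 : ∀ (e : ι2) (e1 : ι1) (u : ιU),
      Pr p ({ω | E2 ω = e} ∩ ({ω | E1 ω = e1} ∩ {ω | U ω = u})) =
      Pr p {ω | E2 ω = e} * Pr p ({ω | E1 ω = e1} ∩ {ω | U ω = u})) :
    ∀ (u : ιU) (x : ιX), Pr p ({ω | X ω = x} ∩ {ω | U ω = u}) > 0 → ∀ y : ιY,
      cPr p {ω | f2 x (E2' ω) (U ω) = y} ({ω | X ω = x} ∩ {ω | U ω = u}) =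
      cPr p {ω | Y ω = y} ({ω | X ω = x} ∩ {ω | U ω = u}) := by
  intro u x hpos y
  set B : Set Ω := {ω | X ω = x} ∩ {ω | U ω = u} with hBdef
  have hB : B = {ω | f1 (E1 ω) u = x} ∩ {ω | U ω = u} := by
    ext ω
    simp only [hBdef, Set.mem_inter_iff, Set.mem_setOf_eq, hXdef]
    constructor <;> rintro ⟨h1, rfl⟩ <;> exact ⟨h1, rfl⟩
  have hPrB : Pr p B =
      ∑ e1 ∈ Finset.univ.image E1, if f1 e1 u = x then
        Pr p ({ω | E1 ω = e1} ∩ {ω | U ω = u}) else 0 := by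
    rw [hB]; exact Pr_fiber p E1 (fun e1 => f1 e1 u = x) {ω | U ω = u}
  -- key computation for any noise variable independent of (E1, U)
  have key : ∀ (E : Ω → ι2),
      (∀ (e : ι2) (e1 : ι1) (u' : ιU),
        Pr p ({ω | E ω = e} ∩ ({ω | E1 ω = e1} ∩ {ω | U ω = u'})) =
        Pr p {ω | E ω = e} * Pr p ({ω | E1 ω = e1} ∩ {ω | U ω = u'})) →
      ∀ (S : Finset ι2), Finset.univ.image E ⊆ S →
      Pr p ({ω | f2 x (E ω) (U ω) = y} ∩ B) =
      (∑ e ∈ S, if f2 x e u = y then Pr p {ω | E ω = e} else 0) * Pr p B := by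
    intro E hind S hS
    have hset : {ω | f2 x (E ω) (U ω) = y} ∩ B = {ω | f2 x (E ω) u = y} ∩ B := by
      ext ω
      simp only [hBdef, Set.mem_inter_iff, Set.mem_setOf_eq]
      constructor <;> rintro ⟨h1, h2, rfl⟩ <;> exact ⟨h1, h2, rfl⟩
    rw [hset, Pr_fiber p E (fun e => f2 x e u = y) B]
    rw [Finset.sum_subset hS ?_]
    · rw [Finset.sum_mul]
      apply Finset.sum_congr rfl
      intro e _
      by_cases hc : f2 x e u = y
      · simp only [hc, if_true]
        -- Pr p ({E = e} ∩ B) = Pr p {E = e} * Pr p B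
        have hshuffle : {ω | E ω = e} ∩ B =
            {ω | f1 (E1 ω) u = x} ∩ ({ω | E ω = e} ∩ {ω | U ω = u}) := by
          rw [hB]; ext ω
          simp only [Set.mem_inter_iff, Set.mem_setOf_eq]; tauto
        rw [hshuffle, Pr_fiber p E1 (fun e1 => f1 e1 u = x)
          ({ω | E ω = e} ∩ {ω | U ω = u})]
        have hterm : ∀ e1 : ι1,
            Pr p ({ω | E1 ω = e1} ∩ ({ω | E ω = e} ∩ {ω | U ω = u})) =
            Pr p {ω | E ω = e} * Pr p ({ω | E1 ω = e1} ∩ {ω | U ω = u}) := by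
          intro e1
          rw [← hind e e1 u]
          congr 1
          ext ω
          simp only [Set.mem_inter_iff, Set.mem_setOf_eq]; tauto
        simp only [hterm]
        rw [hPrB, Finset.mul_sum]
        apply Finset.sum_congr rfl
        intro e1 _
        by_cases hc1 : f1 e1 u = x <;> simp [hc1]
      · simp [hc]
    · intro e _ he
      by_cases hc : f2 x e u = y
      · rw [if_pos hc]
        unfold Pr
        apply Finset.sum_eq_zero
        intro ω _
        rw [if_neg]
        rintro ⟨hEω, -⟩
        exact he (Finset.mem_image.mpr ⟨ω, Finset.mem_univ ω, hEω⟩)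
      · rw [if_neg hc]
  -- apply key to E2' and E2
  set S : Finset ι2 := Finset.univ.image E2' ∪ Finset.univ.image E2 with hSdef
  have h1 := key E2' hindep2' S Finset.subset_union_left
  have h2 := key E2 hindep2 S Finset.subset_union_right
  have hYset : {ω | Y ω = y} ∩ B = {ω | f2 x (E2 ω) (U ω) = y} ∩ B := by
    ext ω
    simp only [hBdef, Set.mem_inter_iff, Set.mem_setOf_eq, hYdef]
    constructor
    · rintro ⟨h1, h2, h3⟩
      rw [h2] at h1
      exact ⟨h1, h2, h3⟩
    · rintro ⟨h1, h2, h3⟩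
      rw [h2]
      exact ⟨h1, rfl, h3⟩
  unfold cPr
  rw [hYset, h1, h2]
  congr 2
  apply Finset.sum_congr rfl
  intro e _
  rw [hiddist e]
end
end

section
/- Under the setup of the previous lemma (counterfactual outcome Y' = g(E', U) with E' independent of (E, U), and evidence event A measurable w.r.t. (E, U)), the population-level Layer 3 valuation decomposes as P(Y'=y | A) = Σ_u P(Y'=y | U=u) · P(U=u | A), where the sum ranges over u with P(U=u, A) > 0. -/
open scoped Classical
noncomputable section

variable {Ω : Type*} [Fintype Ω]

lemma Pr_sum_fiber {ι : Type*} (p : Ω → ℝ) (f : Ω → ι) (S : Set ι)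
    (s : Finset ι) (hs : ∀ ω, f ω ∈ s) :
    Pr p {ω | f ω ∈ S} = ∑ v ∈ s, if v ∈ S then Pr p {ω | f ω = v} else 0 := by
  unfold Pr
  simp only [Set.mem_setOf_eq]
  have h1 : ∀ v ∈ s, (if v ∈ S then ∑ ω, (if f ω = v then p ω else 0) else 0)
      = ∑ ω, if v ∈ S then (if f ω = v then p ω else 0) else 0 := by
    intro v _; split_ifs <;> simp
  rw [Finset.sum_congr rfl h1, Finset.sum_comm]
  apply Finset.sum_congr rfl
  intro ω _
  rw [Finset.sum_eq_single (f ω)]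
  · simp
  · intro v hv hne
    have : ¬ (f ω = v) := fun h => hne h.symm
    simp [this]
  · intro h; exact absurd (hs ω) h

lemma Pr_inter_zero (p : Ω → ℝ) (hp0 : ∀ ω, 0 ≤ p ω) (X Y : Set Ω)
    (hY : Pr p Y = 0) : Pr p (X ∩ Y) = 0 := by
  unfold Pr at *
  have h := (Finset.sum_eq_zero_iff_of_nonneg (by
    intro ω _; split_ifs; exact hp0 ω; exact le_refl 0)).mp hY
  apply Finset.sum_eq_zero
  intro ω _
  by_cases hω : ω ∈ X ∩ Y
  · have := h ω (Finset.mem_univ ω)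
    simp [hω.2] at this
    simp [hω, this]
  · simp [hω]

lemma Pr_partition {ιU : Type*} [Fintype ιU] (p : Ω → ℝ) (U : Ω → ιU) (C : Set Ω) :
    Pr p C = ∑ u : ιU, Pr p (C ∩ {ω | U ω = u}) := by
  unfold Pr
  rw [Finset.sum_comm]
  apply Finset.sum_congr rfl
  intro ω _
  rw [Finset.sum_eq_single (U ω)]
  · by_cases h : ω ∈ C <;> simp [h, Set.mem_inter_iff]
  · intro u _ hne
    have : ¬ (ω ∈ C ∩ {ω | U ω = u}) := fun h => hne h.2.symm
    simp [this]
  · intro h; exact absurd (Finset.mem_univ _) h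

lemma Pr_factor {ιU ιE : Type*} (p : Ω → ℝ)
    (U : Ω → ιU) (E E' : Ω → ιE)
    (hindep : ∀ (e' e : ιE) (u : ιU),
      Pr p ({ω | E' ω = e'} ∩ ({ω | E ω = e} ∩ {ω | U ω = u})) =
      Pr p {ω | E' ω = e'} * Pr p ({ω | E ω = e} ∩ {ω | U ω = u}))
    (S : Set ιE) (T : Set (ιE × ιU)) :
    Pr p ({ω | E' ω ∈ S} ∩ {ω | (E ω, U ω) ∈ T}) =
    Pr p {ω | E' ω ∈ S} * Pr p {ω | (E ω, U ω) ∈ T} := by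
  set h : Ω → ιE × (ιE × ιU) := fun ω => (E' ω, (E ω, U ω)) with hh
  have hset : ({ω | E' ω ∈ S} ∩ {ω | (E ω, U ω) ∈ T}) = {ω | h ω ∈ S ×ˢ T} := by
    ext ω; simp [hh, Set.mem_prod]
  have hmem : ∀ ω, h ω ∈ (Finset.image E' Finset.univ) ×ˢ
      (Finset.image (fun ω => (E ω, U ω)) Finset.univ) := by
    intro ω
    simp only [Finset.mem_product, hh]
    exact ⟨Finset.mem_image_of_mem _ (Finset.mem_univ ω),
           Finset.mem_image_of_mem _ (Finset.mem_univ ω)⟩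
  rw [hset, Pr_sum_fiber p h (S ×ˢ T) _ hmem, Finset.sum_product]
  trans (∑ x ∈ Finset.image E' Finset.univ,
      ∑ y ∈ Finset.image (fun ω => (E ω, U ω)) Finset.univ,
      (if x ∈ S then Pr p {ω | E' ω = x} else 0) *
      (if y ∈ T then Pr p {ω | (E ω, U ω) = y} else 0))
  · refine Finset.sum_congr rfl fun x _ => Finset.sum_congr rfl fun y _ => ?_
    have hfib : {ω | h ω = (x, y)} =
        {ω | E' ω = x} ∩ ({ω | E ω = y.1} ∩ {ω | U ω = y.2}) := by
      ext ω; simp [hh, Prod.ext_iff, and_assoc]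
    have hfib2 : {ω | (E ω, U ω) = y} = ({ω | E ω = y.1} ∩ {ω | U ω = y.2}) := by
      ext ω; simp [Prod.ext_iff]
    by_cases h1 : x ∈ S <;> by_cases h2 : y ∈ T <;>
      simp [h1, h2, Set.mem_prod, hfib, hfib2, hindep x y.1 y.2]
  rw [← Finset.sum_mul_sum]
  rw [Pr_sum_fiber p E' S (Finset.image E' Finset.univ)
      (fun ω => Finset.mem_image_of_mem _ (Finset.mem_univ ω)),
      Pr_sum_fiber p (fun ω => (E ω, U ω)) T (Finset.image (fun ω => (E ω, U ω)) Finset.univ)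
      (fun ω => Finset.mem_image_of_mem _ (Finset.mem_univ ω))]

/-- Population-Level Valuations: abduction–valuation–reduction mixture. -/
theorem stmt3 {ιU ιE ιY : Type*} [Fintype ιU] (p : Ω → ℝ) (hp : IsProb p)
    (U : Ω → ιU) (E E' : Ω → ιE) (g : ιE → ιU → ιY)
    (B : Set (ιE × ιU)) (A : Set Ω)
    (hA : A = {ω | (E ω, U ω) ∈ B})
    (hApos : Pr p A > 0)
    (hindep : ∀ (e' e : ιE) (u : ιU),
      Pr p ({ω | E' ω = e'} ∩ ({ω | E ω = e} ∩ {ω | U ω = u})) =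
      Pr p {ω | E' ω = e'} * Pr p ({ω | E ω = e} ∩ {ω | U ω = u})) :
    ∀ y : ιY,
      cPr p {ω | g (E' ω) (U ω) = y} A =
      ∑ u : ιU, cPr p {ω | g (E' ω) (U ω) = y} {ω | U ω = u} * cPr p {ω | U ω = u} A := by
  intro y
  have hA0 : Pr p A ≠ 0 := ne_of_gt hApos
  unfold cPr
  rw [Pr_partition p U ({ω | g (E' ω) (U ω) = y} ∩ A), Finset.sum_div]
  apply Finset.sum_congr rfl
  intro u _
  have e1 : ({ω | g (E' ω) (U ω) = y} ∩ A) ∩ {ω | U ω = u}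
      = {ω | E' ω ∈ {e' | g e' u = y}} ∩ {ω | (E ω, U ω) ∈ B ∩ {q | q.2 = u}} := by
    subst hA; ext ω
    simp only [Set.mem_inter_iff, Set.mem_setOf_eq]
    constructor
    · rintro ⟨⟨hg, hB⟩, hu⟩; rw [hu] at hg; exact ⟨hg, hB, hu⟩
    · rintro ⟨hg, hB, hu⟩
      exact ⟨⟨by rw [hu]; exact hg, hB⟩, hu⟩
  have e2 : {ω | g (E' ω) (U ω) = y} ∩ {ω | U ω = u}
      = {ω | E' ω ∈ {e' | g e' u = y}} ∩ {ω | (E ω, U ω) ∈ {q : ιE × ιU | q.2 = u}} := by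
    ext ω
    simp only [Set.mem_inter_iff, Set.mem_setOf_eq]
    constructor
    · rintro ⟨hg, hu⟩; rw [hu] at hg; exact ⟨hg, hu⟩
    · rintro ⟨hg, hu⟩
      exact ⟨by rw [hu]; exact hg, hu⟩
  have e3 : {ω | U ω = u} ∩ A = {ω | (E ω, U ω) ∈ B ∩ {q | q.2 = u}} := by
    subst hA; ext ω
    simp only [Set.mem_inter_iff, Set.mem_setOf_eq]
    tauto
  have e4 : {ω | U ω = u} = {ω | (E ω, U ω) ∈ {q : ιE × ιU | q.2 = u}} := by
    ext ω; simp
  rw [e1, e2, e3, e4, Pr_factor p U E E' hindep _ (B ∩ {q | q.2 = u}),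
      Pr_factor p U E E' hindep _ {q : ιE × ιU | q.2 = u}]
  by_cases hz : Pr p {ω | (E ω, U ω) ∈ {q : ιE × ιU | q.2 = u}} = 0
  · have hsplit : {ω | (E ω, U ω) ∈ B ∩ {q | q.2 = u}} =
        {ω | (E ω, U ω) ∈ B} ∩ {ω | (E ω, U ω) ∈ {q : ιE × ιU | q.2 = u}} := by
      ext ω; simp [Set.mem_inter_iff]
    have h1 : Pr p {ω | (E ω, U ω) ∈ B ∩ {q | q.2 = u}} = 0 := by
      rw [hsplit]; exact Pr_inter_zero p hp.1 _ _ hz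
    rw [h1, hz]
    simp
  · rw [mul_div_assoc (b := Pr p {ω | (E ω, U ω) ∈ {q : ιE × ιU | q.2 = u}}),
        div_self hz, mul_one, mul_div_assoc]
end
end

section
/- In a DiscoSCM with X = f1(E1, U), Y = f2(X, E2, U), counterfactual outcome Y'(x) = f2(x, E2', U) where E2' is distributed as E2 and (E1, E2, E2', U) satisfy: E2' independent of (E1, E2, U), E2 independent of (E1, U), and noises independent of U. Then for any unit u and values x, y with all conditioning events of positive probability, the individual-level Layer 3 valuation satisfies P(Y'(x)=y | A, U=u) = P(Y'(x)=y | U=u) = P(Y=y | X=x, U=u) for any evidence event A measurable with respect to (E1, E2, U). -/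
open scoped Classical
noncomputable section

variable {Ω : Type*} [Fintype Ω]

lemma Pr_mono (p : Ω → ℝ) (hp : ∀ ω, 0 ≤ p ω) {A B : Set Ω} (h : A ⊆ B) :
    Pr p A ≤ Pr p B := by
  apply Finset.sum_le_sum
  intro ω _
  by_cases hω : ω ∈ A
  · simp [hω, h hω]
  · simp only [hω, if_false]
    split_ifs
    · exact hp ω
    · exact le_refl 0

lemma Pr_part {α : Type*} (p : Ω → ℝ) (F : Ω → α) (V : Finset α)
    (hV : ∀ ω, F ω ∈ V) (S : Set α) (A : Set Ω) :
    Pr p ({ω | F ω ∈ S} ∩ A) = ∑ a ∈ V, if a ∈ S then Pr p ({ω | F ω = a} ∩ A) else 0 := by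
  have hstep : ∀ a, (if a ∈ S then Pr p ({ω | F ω = a} ∩ A) else 0)
      = ∑ ω, if a ∈ S ∧ F ω = a ∧ ω ∈ A then p ω else 0 := by
    intro a
    unfold Pr
    split_ifs with hs
    · apply Finset.sum_congr rfl; intro ω _
      simp [Set.mem_inter_iff, hs]
    · simp [hs]
  calc Pr p ({ω | F ω ∈ S} ∩ A)
      = ∑ ω, ∑ a ∈ V, if a ∈ S ∧ F ω = a ∧ ω ∈ A then p ω else 0 := by
        unfold Pr
        apply Finset.sum_congr rfl; intro ω _
        symm
        refine (Finset.sum_eq_single_of_mem (F ω) (hV ω) ?_).trans ?_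
        · intro b _ hb
          split_ifs with h
          · exact absurd h.2.1.symm hb
          · rfl
        · by_cases h1 : F ω ∈ S <;> by_cases h2 : ω ∈ A <;> simp [h1, h2]
    _ = ∑ a ∈ V, ∑ ω, if a ∈ S ∧ F ω = a ∧ ω ∈ A then p ω else 0 := Finset.sum_comm
    _ = ∑ a ∈ V, if a ∈ S then Pr p ({ω | F ω = a} ∩ A) else 0 :=
        Finset.sum_congr rfl fun a _ => (hstep a).symm

lemma Pr_marg {α : Type*} (p : Ω → ℝ) (F : Ω → α) (V : Finset α)
    (hV : ∀ ω, F ω ∈ V) (S : Set α) :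
    Pr p {ω | F ω ∈ S} = ∑ a ∈ V, if a ∈ S then Pr p {ω | F ω = a} else 0 := by
  have := Pr_part p F V hV S Set.univ
  simpa [Set.inter_univ] using this

lemma indep_lift {α β : Type*} (p : Ω → ℝ) (F : Ω → α) (G : Ω → β)
    (h : ∀ a b, Pr p ({ω | F ω = a} ∩ {ω | G ω = b}) =
      Pr p {ω | F ω = a} * Pr p {ω | G ω = b})
    (S : Set α) (C : Set β) :
    Pr p ({ω | F ω ∈ S} ∩ {ω | G ω ∈ C}) = Pr p {ω | F ω ∈ S} * Pr p {ω | G ω ∈ C} := by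
  have hFmem : ∀ ω, F ω ∈ Finset.univ.image F :=
    fun ω => Finset.mem_image_of_mem F (Finset.mem_univ ω)
  have hGmem : ∀ ω, G ω ∈ Finset.univ.image G :=
    fun ω => Finset.mem_image_of_mem G (Finset.mem_univ ω)
  rw [Pr_part p F _ hFmem S, Pr_marg p F _ hFmem S, Finset.sum_mul]
  apply Finset.sum_congr rfl; intro a _
  split_ifs with hs
  · rw [Set.inter_comm, Pr_part p G _ hGmem C, Pr_marg p G _ hGmem C,
      mul_comm, Finset.sum_mul]
    apply Finset.sum_congr rfl; intro b _
    split_ifs with hc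
    · rw [Set.inter_comm, h a b, mul_comm]
    · simp
  · simp

/-- Individual-Level Valuations: P(y_x | e; u) = P(y_x; u) = P(y | x; u). -/
theorem stmt4 {ιU ι1 ι2 ιX ιY : Type*} (p : Ω → ℝ) (hp : IsProb p)
    (U : Ω → ιU) (E1 : Ω → ι1) (E2 E2' : Ω → ι2)
    (f1 : ι1 → ιU → ιX) (f2 : ιX → ι2 → ιU → ιY)
    (X : Ω → ιX) (Y : Ω → ιY)
    (hXdef : ∀ ω, X ω = f1 (E1 ω) (U ω))
    (hYdef : ∀ ω, Y ω = f2 (X ω) (E2 ω) (U ω))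
    (hiddist : ∀ e : ι2, Pr p {ω | E2' ω = e} = Pr p {ω | E2 ω = e})
    -- E2' independent of (E1, E2, U)
    (hindep2' : ∀ (e' e : ι2) (e1 : ι1) (u : ιU),
      Pr p ({ω | E2' ω = e'} ∩ ({ω | E1 ω = e1} ∩ {ω | E2 ω = e} ∩ {ω | U ω = u})) =
      Pr p {ω | E2' ω = e'} * Pr p ({ω | E1 ω = e1} ∩ {ω | E2 ω = e} ∩ {ω | U ω = u}))
    -- E2 independent of (E1, U)
    (hindep2 : ∀ (e : ι2) (e1 : ι1) (u : ιU),
      Pr p ({ω | E2 ω = e} ∩ ({ω | E1 ω = e1} ∩ {ω | U ω = u})) =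
      Pr p {ω | E2 ω = e} * Pr p ({ω | E1 ω = e1} ∩ {ω | U ω = u}))
    -- noises independent of U
    (hnoiseU : ∀ (e1 : ι1) (e e' : ι2) (u : ιU),
      Pr p ({ω | E1 ω = e1} ∩ {ω | E2 ω = e} ∩ {ω | E2' ω = e'} ∩ {ω | U ω = u}) =
      Pr p ({ω | E1 ω = e1} ∩ {ω | E2 ω = e} ∩ {ω | E2' ω = e'}) * Pr p {ω | U ω = u})
    -- evidence event measurable w.r.t. (E1, E2, U)
    (B : Set (ι1 × ι2 × ιU)) (A : Set Ω)
    (hA : A = {ω | (E1 ω, E2 ω, U ω) ∈ B}) :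
    ∀ (u : ιU) (x : ιX) (y : ιY),
      Pr p (A ∩ {ω | U ω = u}) > 0 →
      Pr p ({ω | X ω = x} ∩ {ω | U ω = u}) > 0 →
      cPr p {ω | f2 x (E2' ω) (U ω) = y} (A ∩ {ω | U ω = u}) =
        cPr p {ω | f2 x (E2' ω) (U ω) = y} {ω | U ω = u} ∧
      cPr p {ω | f2 x (E2' ω) (U ω) = y} {ω | U ω = u} =
        cPr p {ω | Y ω = y} ({ω | X ω = x} ∩ {ω | U ω = u}) := by
  intro u x y hApos hXpos
  obtain ⟨hp0, -⟩ := hp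
  -- S : set of noise values producing y; T : set producing x
  set S : Set ι2 := {e | f2 x e u = y} with hS
  set T3 : Ω → ι1 × ι2 × ιU := fun ω => (E1 ω, E2 ω, U ω) with hT3
  set P2 : Ω → ι1 × ιU := fun ω => (E1 ω, U ω) with hP2
  -- atom-level independence restated for the bundled maps
  have hI1 : ∀ (e' : ι2) (t : ι1 × ι2 × ιU),
      Pr p ({ω | E2' ω = e'} ∩ {ω | T3 ω = t}) =
        Pr p {ω | E2' ω = e'} * Pr p {ω | T3 ω = t} := by
    rintro e' ⟨e1, e, u'⟩
    have hset : {ω | T3 ω = (e1, e, u')} =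
        {ω | E1 ω = e1} ∩ {ω | E2 ω = e} ∩ {ω | U ω = u'} := by
      ext ω; simp [hT3, Prod.ext_iff, and_assoc]
    rw [hset]; exact hindep2' e' e e1 u'
  have hI2 : ∀ (e : ι2) (q : ι1 × ιU),
      Pr p ({ω | E2 ω = e} ∩ {ω | P2 ω = q}) =
        Pr p {ω | E2 ω = e} * Pr p {ω | P2 ω = q} := by
    rintro e ⟨e1, u'⟩
    have hset : {ω | P2 ω = (e1, u')} = {ω | E1 ω = e1} ∩ {ω | U ω = u'} := by
      ext ω; simp [hP2, Prod.ext_iff]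
    rw [hset]; exact hindep2 e e1 u'
  -- conditioning events as preimages of the bundled maps
  have hAU : A ∩ {ω | U ω = u} = {ω | T3 ω ∈ B ∩ {t | t.2.2 = u}} := by
    ext ω; simp [hA, hT3, Set.mem_inter_iff]
  have hUu : {ω | U ω = u} = {ω | T3 ω ∈ {t : ι1 × ι2 × ιU | t.2.2 = u}} := by
    ext ω; simp [hT3]
  have hXU : {ω | X ω = x} ∩ {ω | U ω = u} =
      {ω | P2 ω ∈ {q : ι1 × ιU | f1 q.1 q.2 = x ∧ q.2 = u}} := by
    ext ω; simp [hP2, hXdef, Set.mem_inter_iff]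
  -- rewriting the counterfactual / factual events on the conditioning sets
  have hE1 : {ω | f2 x (E2' ω) (U ω) = y} ∩ (A ∩ {ω | U ω = u}) =
      {ω | E2' ω ∈ S} ∩ (A ∩ {ω | U ω = u}) := by
    ext ω
    simp only [Set.mem_inter_iff, Set.mem_setOf_eq, hS]
    constructor
    · rintro ⟨h1, h2, h3⟩; rw [h3] at h1; exact ⟨h1, h2, h3⟩
    · rintro ⟨h1, h2, h3⟩; rw [h3]; exact ⟨h1, h2, rfl⟩
  have hE2 : {ω | f2 x (E2' ω) (U ω) = y} ∩ {ω | U ω = u} =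
      {ω | E2' ω ∈ S} ∩ {ω | U ω = u} := by
    ext ω
    simp only [Set.mem_inter_iff, Set.mem_setOf_eq, hS]
    constructor
    · rintro ⟨h1, h3⟩; rw [h3] at h1; exact ⟨h1, h3⟩
    · rintro ⟨h1, h3⟩; rw [h3]; exact ⟨h1, rfl⟩
  have hE3 : {ω | Y ω = y} ∩ ({ω | X ω = x} ∩ {ω | U ω = u}) =
      {ω | E2 ω ∈ S} ∩ ({ω | X ω = x} ∩ {ω | U ω = u}) := by
    ext ω
    simp only [Set.mem_inter_iff, Set.mem_setOf_eq, hS]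
    constructor
    · rintro ⟨h1, h2, h3⟩; rw [hYdef, h2, h3] at h1; exact ⟨h1, h2, h3⟩
    · rintro ⟨h1, h2, h3⟩; rw [hYdef, h2, h3]; exact ⟨h1, rfl, rfl⟩
  -- independence at the event level
  have key1 : Pr p ({ω | E2' ω ∈ S} ∩ (A ∩ {ω | U ω = u})) =
      Pr p {ω | E2' ω ∈ S} * Pr p (A ∩ {ω | U ω = u}) := by
    rw [hAU]; exact indep_lift p E2' T3 hI1 S _
  have key2 : Pr p ({ω | E2' ω ∈ S} ∩ {ω | U ω = u}) =
      Pr p {ω | E2' ω ∈ S} * Pr p {ω | U ω = u} := by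
    rw [hUu]; exact indep_lift p E2' T3 hI1 S _
  have key3 : Pr p ({ω | E2 ω ∈ S} ∩ ({ω | X ω = x} ∩ {ω | U ω = u})) =
      Pr p {ω | E2 ω ∈ S} * Pr p ({ω | X ω = x} ∩ {ω | U ω = u}) := by
    rw [hXU]; exact indep_lift p E2 P2 hI2 S _
  -- equal marginals: P(E2' ∈ S) = P(E2 ∈ S)
  have hmarg : Pr p {ω | E2' ω ∈ S} = Pr p {ω | E2 ω ∈ S} := by
    set V : Finset ι2 := Finset.univ.image E2' ∪ Finset.univ.image E2 with hV
    have hV1 : ∀ ω, E2' ω ∈ V := fun ω =>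
      Finset.mem_union_left _ (Finset.mem_image_of_mem E2' (Finset.mem_univ ω))
    have hV2 : ∀ ω, E2 ω ∈ V := fun ω =>
      Finset.mem_union_right _ (Finset.mem_image_of_mem E2 (Finset.mem_univ ω))
    rw [Pr_marg p E2' V hV1 S, Pr_marg p E2 V hV2 S]
    exact Finset.sum_congr rfl fun e _ => by rw [hiddist e]
  -- positivity of P(U = u)
  have hUpos : Pr p {ω | U ω = u} > 0 :=
    lt_of_lt_of_le hApos (Pr_mono p hp0 Set.inter_subset_right)
  constructor
  · rw [cPr, cPr, hE1, hE2, key1, key2,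
      mul_div_assoc, div_self (ne_of_gt hApos), mul_one,
      mul_div_assoc, div_self (ne_of_gt hUpos), mul_one]
  · rw [cPr, cPr, hE2, hE3, key2, key3,
      mul_div_assoc, div_self (ne_of_gt hUpos), mul_one,
      mul_div_assoc, div_self (ne_of_gt hXpos), mul_one, hmarg]
end
end

section
/- Under the individual-level valuation theorem, the probability of consistency PC(u) := P(Y'(x)=y | X=x, Y=y, U=u) equals the observational conditional probability P(Y=y | X=x, U=u), for any u, x, y with P(X=x, Y=y, U=u) > 0. -/
open scoped Classical
noncomputable section

variable {Ω : Type*} [Fintype Ω]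

lemma pr_fiber {κ : Type*} (p : Ω → ℝ) (g : Ω → κ) (A : κ → Prop)
    (s : Finset κ) (hs : ∀ ω, g ω ∈ s) :
    Pr p {ω | A (g ω)} = ∑ k ∈ s, if A k then Pr p {ω | g ω = k} else 0 := by
  unfold Pr
  rw [← Finset.sum_fiberwise_of_maps_to (g := g) (fun ω _ => hs ω)
      (fun ω => if ω ∈ {ω | A (g ω)} then p ω else 0)]
  apply Finset.sum_congr rfl
  intro k _
  have h1 : ∀ ω ∈ Finset.univ.filter (fun ω => g ω = k),
      (if ω ∈ {ω | A (g ω)} then p ω else 0) = (if A k then p ω else 0) := by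
    intro ω hω
    rw [Finset.mem_filter] at hω
    simp only [Set.mem_setOf_eq, hω.2]
  rw [Finset.sum_congr rfl h1]
  by_cases hA : A k
  · simp only [hA, if_true, Set.mem_setOf_eq]
    rw [Finset.sum_filter]
  · simp [hA]

lemma ite_and_mul {P Q : Prop} [Decidable P] [Decidable Q] (a b : ℝ) :
    (if P ∧ Q then a * b else 0) = (if P then a else 0) * (if Q then b else 0) := by
  by_cases hP : P <;> by_cases hQ : Q <;> simp [hP, hQ]

/-- Probability of consistency PC(u) = P(Y'(x)=y | X=x, Y=y, U=u)
equals the observational conditional P(Y=y | X=x, U=u). -/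
theorem stmt5 {ιU ι1 ι2 ιX ιY : Type*} (p : Ω → ℝ) (hp : IsProb p)
    (U : Ω → ιU) (E1 : Ω → ι1) (E2 E2' : Ω → ι2)
    (f1 : ι1 → ιU → ιX) (f2 : ιX → ι2 → ιU → ιY)
    (X : Ω → ιX) (Y : Ω → ιY)
    (hXdef : ∀ ω, X ω = f1 (E1 ω) (U ω))
    (hYdef : ∀ ω, Y ω = f2 (X ω) (E2 ω) (U ω))
    (hiddist : ∀ e : ι2, Pr p {ω | E2' ω = e} = Pr p {ω | E2 ω = e})
    (hindep2' : ∀ (e' e : ι2) (e1 : ι1) (u : ιU),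
      Pr p ({ω | E2' ω = e'} ∩ ({ω | E1 ω = e1} ∩ {ω | E2 ω = e} ∩ {ω | U ω = u})) =
      Pr p {ω | E2' ω = e'} * Pr p ({ω | E1 ω = e1} ∩ {ω | E2 ω = e} ∩ {ω | U ω = u}))
    (hindep2 : ∀ (e : ι2) (e1 : ι1) (u : ιU),
      Pr p ({ω | E2 ω = e} ∩ ({ω | E1 ω = e1} ∩ {ω | U ω = u})) =
      Pr p {ω | E2 ω = e} * Pr p ({ω | E1 ω = e1} ∩ {ω | U ω = u})) :
    ∀ (u : ιU) (x : ιX) (y : ιY),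
      Pr p ({ω | X ω = x} ∩ {ω | Y ω = y} ∩ {ω | U ω = u}) > 0 →
      -- PC(u) := P(Y'(x) = y | X = x, Y = y, U = u)
      cPr p {ω | f2 x (E2' ω) (U ω) = y}
          ({ω | X ω = x} ∩ {ω | Y ω = y} ∩ {ω | U ω = u}) =
        cPr p {ω | Y ω = y} ({ω | X ω = x} ∩ {ω | U ω = u}) := by
  intro u x y hpos
  have hp0 := hp.1
  set B : Set Ω := {ω | X ω = x} ∩ {ω | Y ω = y} ∩ {ω | U ω = u} with hBdef
  set D : Set Ω := {ω | X ω = x} ∩ {ω | U ω = u} with hDdef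
  have hDpos : 0 < Pr p D :=
    lt_of_lt_of_le hpos (Pr_mono p hp0 (fun ω hω => ⟨hω.1.1, hω.2⟩))
  -- finsets of values
  set s2 : Finset ι2 := Finset.univ.image E2 ∪ Finset.univ.image E2' with hs2
  set s1 : Finset ι1 := Finset.univ.image E1 with hs1
  set sU : Finset ιU := Finset.univ.image U with hsU
  have hm2 : ∀ ω, E2 ω ∈ s2 := fun ω =>
    Finset.mem_union_left _ (Finset.mem_image_of_mem _ (Finset.mem_univ ω))
  have hm2' : ∀ ω, E2' ω ∈ s2 := fun ω =>
    Finset.mem_union_right _ (Finset.mem_image_of_mem _ (Finset.mem_univ ω))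
  have hm1 : ∀ ω, E1 ω ∈ s1 := fun ω => Finset.mem_image_of_mem _ (Finset.mem_univ ω)
  have hmU : ∀ ω, U ω ∈ sU := fun ω => Finset.mem_image_of_mem _ (Finset.mem_univ ω)
  set c : ℝ := Pr p {ω | f2 x (E2 ω) u = y} with hc
  -- Step A : counterfactual marginal equals factual one
  have hA : Pr p {ω | f2 x (E2' ω) u = y} = c := by
    rw [hc, pr_fiber p E2' (fun e => f2 x e u = y) s2 hm2',
        pr_fiber p E2 (fun e => f2 x e u = y) s2 hm2]
    apply Finset.sum_congr rfl
    intro e _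
    by_cases h : f2 x e u = y
    · simp only [h, if_true, hiddist e]
    · simp [h]
  -- decomposition of triple fibers as intersections
  have hg3set : ∀ (r : ι1 × ι2 × ιU),
      {ω | (E1 ω, E2 ω, U ω) = r} =
      {ω | E1 ω = r.1} ∩ {ω | E2 ω = r.2.1} ∩ {ω | U ω = r.2.2} := by
    intro r
    ext ω
    simp [Prod.ext_iff, Set.mem_setOf_eq, and_assoc]
  have hg2set : ∀ (r : ι1 × ιU),
      {ω | (E1 ω, U ω) = r} = {ω | E1 ω = r.1} ∩ {ω | U ω = r.2} := by
    intro r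
    ext ω
    simp [Prod.ext_iff, Set.mem_setOf_eq]
  -- decomposition of B
  have hBdec : Pr p B =
      ∑ r ∈ s1 ×ˢ s2 ×ˢ sU,
        if (f1 r.1 r.2.2 = x ∧ f2 (f1 r.1 r.2.2) r.2.1 r.2.2 = y ∧ r.2.2 = u) then
          Pr p ({ω | E1 ω = r.1} ∩ {ω | E2 ω = r.2.1} ∩ {ω | U ω = r.2.2}) else 0 := by
    have hset : B = {ω | (fun r : ι1 × ι2 × ιU =>
        f1 r.1 r.2.2 = x ∧ f2 (f1 r.1 r.2.2) r.2.1 r.2.2 = y ∧ r.2.2 = u) (E1 ω, E2 ω, U ω)} := by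
      ext ω
      simp only [hBdef, Set.mem_inter_iff, Set.mem_setOf_eq, hXdef, hYdef, and_assoc]
    rw [hset, pr_fiber p (fun ω => (E1 ω, E2 ω, U ω))
      (fun r : ι1 × ι2 × ιU => f1 r.1 r.2.2 = x ∧ f2 (f1 r.1 r.2.2) r.2.1 r.2.2 = y ∧ r.2.2 = u)
      (s1 ×ˢ s2 ×ˢ sU)
      (fun ω => by
        rw [Finset.mem_product, Finset.mem_product]
        exact ⟨hm1 ω, hm2 ω, hmU ω⟩)]
    apply Finset.sum_congr rfl
    intro r _
    by_cases h : f1 r.1 r.2.2 = x ∧ f2 (f1 r.1 r.2.2) r.2.1 r.2.2 = y ∧ r.2.2 = u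
    · simp only [h, if_true, hg3set r]
    · simp [h]
  -- decomposition of D
  have hDdec : Pr p D =
      ∑ r ∈ s1 ×ˢ sU,
        if (f1 r.1 r.2 = x ∧ r.2 = u) then
          Pr p ({ω | E1 ω = r.1} ∩ {ω | U ω = r.2}) else 0 := by
    have hset : D = {ω | (fun r : ι1 × ιU =>
        f1 r.1 r.2 = x ∧ r.2 = u) (E1 ω, U ω)} := by
      ext ω
      simp only [hDdef, Set.mem_inter_iff, Set.mem_setOf_eq, hXdef]
    rw [hset, pr_fiber p (fun ω => (E1 ω, U ω))
      (fun r : ι1 × ιU => f1 r.1 r.2 = x ∧ r.2 = u) (s1 ×ˢ sU)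
      (fun ω => by
        rw [Finset.mem_product]
        exact ⟨hm1 ω, hmU ω⟩)]
    apply Finset.sum_congr rfl
    intro r _
    by_cases h : f1 r.1 r.2 = x ∧ r.2 = u
    · simp only [h, if_true, hg2set r]
    · simp [h]
  -- Step B : factorization of the counterfactual numerator
  have hnum : Pr p ({ω | f2 x (E2' ω) (U ω) = y} ∩ B) =
      Pr p {ω | f2 x (E2' ω) u = y} * Pr p B := by
    have hset : {ω | f2 x (E2' ω) (U ω) = y} ∩ B =
        {ω | (fun k : ι2 × ι1 × ι2 × ιU =>
          (f2 x k.1 u = y) ∧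
          (f1 k.2.1 k.2.2.2 = x ∧ f2 (f1 k.2.1 k.2.2.2) k.2.2.1 k.2.2.2 = y ∧ k.2.2.2 = u))
          (E2' ω, E1 ω, E2 ω, U ω)} := by
      ext ω
      simp only [hBdef, Set.mem_inter_iff, Set.mem_setOf_eq, hXdef, hYdef, and_assoc]
      constructor
      · rintro ⟨h1, h2, h3, h4⟩
        rw [h4] at h1
        exact ⟨h1, h2, h3, h4⟩
      · rintro ⟨h1, h2, h3, h4⟩
        rw [← h4] at h1
        exact ⟨h1, h2, h3, h4⟩
    rw [hset, pr_fiber p (fun ω => (E2' ω, E1 ω, E2 ω, U ω))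
      (fun k : ι2 × ι1 × ι2 × ιU =>
        (f2 x k.1 u = y) ∧
        (f1 k.2.1 k.2.2.2 = x ∧ f2 (f1 k.2.1 k.2.2.2) k.2.2.1 k.2.2.2 = y ∧ k.2.2.2 = u))
      (s2 ×ˢ s1 ×ˢ s2 ×ˢ sU)
      (fun ω => by
        rw [Finset.mem_product, Finset.mem_product, Finset.mem_product]
        exact ⟨hm2' ω, hm1 ω, hm2 ω, hmU ω⟩)]
    trans (∑ k ∈ s2 ×ˢ s1 ×ˢ s2 ×ˢ sU,
        (if f2 x k.1 u = y then Pr p {ω | E2' ω = k.1} else 0) *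
        (if (f1 k.2.1 k.2.2.2 = x ∧ f2 (f1 k.2.1 k.2.2.2) k.2.2.1 k.2.2.2 = y ∧ k.2.2.2 = u) then
          Pr p ({ω | E1 ω = k.2.1} ∩ {ω | E2 ω = k.2.2.1} ∩ {ω | U ω = k.2.2.2}) else 0))
    · apply Finset.sum_congr rfl
      intro k _
      obtain ⟨e', e1, e, v⟩ := k
      by_cases h : (f2 x e' u = y) ∧ (f1 e1 v = x ∧ f2 (f1 e1 v) e v = y ∧ v = u)
      · simp only [h, and_self, if_true, h.1, h.2]
        have hsk : {ω | (E2' ω, E1 ω, E2 ω, U ω) = (e', e1, e, u)} =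
            {ω | E2' ω = e'} ∩ ({ω | E1 ω = e1} ∩ {ω | E2 ω = e} ∩ {ω | U ω = u}) := by
          ext ω
          simp [Prod.ext_iff, Set.mem_setOf_eq, and_assoc]
        rw [hsk, hindep2' e' e e1 u]
        simp only [true_and, and_true, mul_ite, mul_zero]
      · rw [if_neg h]
        rw [not_and_or] at h
        rcases h with h | h
        · rw [if_neg h, zero_mul]
        · rw [if_neg h, mul_zero]
    rw [Finset.sum_product, pr_fiber p E2' (fun e => f2 x e u = y) s2 hm2', hBdec,
        Finset.sum_mul_sum]
  -- Step C : factorization of the factual numerator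
  have hnum2 : Pr p ({ω | Y ω = y} ∩ D) = c * Pr p D := by
    have hset : {ω | Y ω = y} ∩ D =
        {ω | (fun k : ι2 × ι1 × ιU =>
          (f2 x k.1 u = y) ∧ (f1 k.2.1 k.2.2 = x ∧ k.2.2 = u)) (E2 ω, E1 ω, U ω)} := by
      ext ω
      simp only [hDdef, Set.mem_inter_iff, Set.mem_setOf_eq, hXdef, hYdef]
      constructor
      · rintro ⟨h1, h2, h3⟩
        rw [h2, h3] at h1
        exact ⟨h1, h2, h3⟩
      · rintro ⟨h1, h2, h3⟩
        rw [← h2, ← h3] at h1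
        exact ⟨h1, h2, h3⟩
    rw [hset, pr_fiber p (fun ω => (E2 ω, E1 ω, U ω))
      (fun k : ι2 × ι1 × ιU => (f2 x k.1 u = y) ∧ (f1 k.2.1 k.2.2 = x ∧ k.2.2 = u))
      (s2 ×ˢ s1 ×ˢ sU)
      (fun ω => by
        rw [Finset.mem_product, Finset.mem_product]
        exact ⟨hm2 ω, hm1 ω, hmU ω⟩)]
    trans (∑ k ∈ s2 ×ˢ s1 ×ˢ sU,
        (if f2 x k.1 u = y then Pr p {ω | E2 ω = k.1} else 0) *
        (if (f1 k.2.1 k.2.2 = x ∧ k.2.2 = u) then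
          Pr p ({ω | E1 ω = k.2.1} ∩ {ω | U ω = k.2.2}) else 0))
    · apply Finset.sum_congr rfl
      intro k _
      obtain ⟨e, e1, v⟩ := k
      by_cases h : (f2 x e u = y) ∧ (f1 e1 v = x ∧ v = u)
      · simp only [h, and_self, if_true, h.1, h.2]
        have hsk : {ω | (E2 ω, E1 ω, U ω) = (e, e1, u)} =
            {ω | E2 ω = e} ∩ ({ω | E1 ω = e1} ∩ {ω | U ω = u}) := by
          ext ω
          simp [Prod.ext_iff, Set.mem_setOf_eq, and_assoc]
        rw [hsk, hindep2 e e1 u]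
        simp only [true_and, and_true, mul_ite, mul_zero]
      · rw [if_neg h]
        rw [not_and_or] at h
        rcases h with h | h
        · rw [if_neg h, zero_mul]
        · rw [if_neg h, mul_zero]
    rw [Finset.sum_product, hc, pr_fiber p E2 (fun e => f2 x e u = y) s2 hm2, hDdec,
        Finset.sum_mul_sum]
  -- conclude
  unfold cPr
  rw [hnum, hA, hnum2, mul_div_assoc, mul_div_assoc,
      div_self (ne_of_gt hpos), div_self (ne_of_gt hDpos)]
end
end
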